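/- arXiv:math/9205208 — 2 statements merged into one kernel-verified Lean document; each statement's English description precedes it below -/
import Mathlib

section
/- Let f, g : ℕ → ℕ with 1 ≤ g(k) < f(k) for all k, and let 0 = n_0 < n_1 < n_2 < ⋯ be a strictly increasing sequence of natural numbers. Define f', g' : ℕ → ℕ by f'(i) = f(n_i)·f(n_i+1)⋯f(n_{i+1}−1) and g'(i) = g(n_i)·g(n_i+1)⋯g(n_{i+1}−1). Then 𝔠(f',g') ≤ 𝔠(f,g). -/
/-- `B` is a `g`-slalom: a sequence of finite sets of naturals with `|B k| = g k`. -/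
def IsSlalom (g : ℕ → ℕ) (B : ℕ → Finset ℕ) : Prop := ∀ k, (B k).card = g k

/-- `x` is covered by the slalom `B`. -/
def Covers (B : ℕ → Finset ℕ) (x : ℕ → ℕ) : Prop := ∀ k, x k ∈ B k

/-- `slalomCov f g` is the least cardinality of a family of `g`-slaloms covering
every `x : ℕ → ℕ` with `x k < f k` for all `k`. -/
noncomputable def slalomCov (f g : ℕ → ℕ) : Cardinal :=
  sInf { c : Cardinal | ∃ 𝓑 : Set (ℕ → Finset ℕ),
    (∀ B ∈ 𝓑, IsSlalom g B) ∧
    (∀ x : ℕ → ℕ, (∀ k, x k < f k) → ∃ B ∈ 𝓑, Covers B x) ∧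
    c = Cardinal.mk 𝓑 }

/-!
Code the restriction of an `f`-bounded function to a finite block `s` of coordinates by a single
number below `∏ k ∈ s, f k`, through any bijection `(∀ k : s, Fin (f k)) ≃ Fin (∏ k ∈ s, f k)`.
As the blocks are disjoint, every `f'`-bounded function is the blockwise code of an `f`-bounded
one. Cut a `g`-slalom `B` down to `[0, f k)` and pad it back to `g k` points at each `k`, which
is possible as `g ≤ f`; the codes of the products of these sets over the `i`-th block form the
`i`-th set of a `g'`-slalom, which covers the code of every function that `B` covers. So every
cover for `(f, g)` turns into a cover for `(f', g')` that is no larger.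
-/

open Finset Function

def IsSlalomCover (f g : ℕ → ℕ) (𝓑 : Set (ℕ → Finset ℕ)) : Prop :=
  (∀ B ∈ 𝓑, IsSlalom g B) ∧ ∀ x : ℕ → ℕ, (∀ k, x k < f k) → ∃ B ∈ 𝓑, Covers B x

theorem slalomCov_eq_sInf (f g : ℕ → ℕ) :
    slalomCov f g = sInf {c | ∃ 𝓑, IsSlalomCover f g 𝓑 ∧ c = Cardinal.mk 𝓑} := by
  simp only [slalomCov, IsSlalomCover, and_assoc]

section

variable {f g : ℕ → ℕ}

theorem IsSlalomCover.slalomCov_le {𝓑 : Set (ℕ → Finset ℕ)}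
    (h : IsSlalomCover f g 𝓑) : slalomCov f g ≤ Cardinal.mk 𝓑 := by
  rw [slalomCov_eq_sInf]
  exact csInf_le' ⟨𝓑, h, rfl⟩

theorem isSlalomCover_setOf_isSlalom (hg : ∀ k, 1 ≤ g k) :
    IsSlalomCover f g {B | IsSlalom g B} :=
  ⟨fun _ => id, fun x _ => ⟨fun k => Ico (x k) (x k + g k), fun k => by simp,
    fun k => mem_Ico.mpr ⟨le_rfl, Nat.lt_add_of_pos_right (hg k)⟩⟩⟩

theorem exists_isSlalomCover_mk_eq_slalomCov (hg : ∀ k, 1 ≤ g k) :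
    ∃ 𝓑, IsSlalomCover f g 𝓑 ∧ Cardinal.mk 𝓑 = slalomCov f g := by
  rw [slalomCov_eq_sInf]
  obtain ⟨𝓑, h𝓑, hcard⟩ := csInf_mem (s := {c | ∃ 𝓑, IsSlalomCover f g 𝓑 ∧ c = Cardinal.mk 𝓑})
    ⟨_, _, isSlalomCover_setOf_isSlalom hg, rfl⟩
  exact ⟨𝓑, h𝓑, hcard.symm⟩

/-- A Tukey connection from `(f', g')`-covering to `(f, g)`-covering bounds the cardinals. -/
theorem slalomCov_le_of_tukey {f' g' : ℕ → ℕ} (hg : ∀ k, 1 ≤ g k)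
    (R : (ℕ → ℕ) → (ℕ → ℕ) → Prop)
    (hR : ∀ x' : ℕ → ℕ, (∀ i, x' i < f' i) → ∃ x, (∀ k, x k < f k) ∧ R x' x)
    (hT : ∀ B, IsSlalom g B →
      ∃ B', IsSlalom g' B' ∧ ∀ x' x, R x' x → Covers B x → Covers B' x') :
    slalomCov f' g' ≤ slalomCov f g := by
  obtain ⟨𝓑, ⟨h𝓑, hcov⟩, hcard⟩ := exists_isSlalomCover_mk_eq_slalomCov (f := f) hg
  choose T hTslalom hTcov using hT
  have hcover : IsSlalomCover f' g' (Set.range fun B : 𝓑 => T B (h𝓑 B B.2)) := by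
    refine ⟨by rintro _ ⟨B, rfl⟩; exact hTslalom _ _, fun x' hx' => ?_⟩
    obtain ⟨x, hx, hx'x⟩ := hR x' hx'
    obtain ⟨B, hB, hBx⟩ := hcov x hx
    exact ⟨_, ⟨⟨B, hB⟩, rfl⟩, hTcov B _ x' x hx'x hBx⟩
  exact hcover.slalomCov_le.trans (Cardinal.mk_range_le.trans hcard.le)

end

theorem exists_forall_lt_and_eq_of_pairwise_disjoint {ι α : Type*} {s : ι → Finset α}
    (hs : Pairwise (Disjoint on s)) {f : α → ℕ} (hf : ∀ k, 0 < f k)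
    (d : ∀ i, ∀ k : s i, Fin (f k)) :
    ∃ x : α → ℕ, (∀ k, x k < f k) ∧ ∀ i (k : s i), x k = d i k := by
  classical
  refine ⟨fun k => if h : ∃ i, k ∈ s i then d h.choose ⟨k, h.choose_spec⟩ else 0,
    fun k => ?_, fun i ⟨k, hk⟩ => ?_⟩
  · dsimp only
    split_ifs
    exacts [Fin.isLt _, hf k]
  · have hagree : ∀ j (hj : k ∈ s j), d j ⟨k, hj⟩ = d i ⟨k, hk⟩ := by
      intro j hj
      obtain rfl : j = i := by_contra fun hji => disjoint_left.mp (hs hji) hj hk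
      rfl
    simp only [dif_pos (⟨i, hk⟩ : ∃ i, k ∈ s i), hagree]

theorem exists_fin_superset_card_eq {m n : ℕ} {B : Finset ℕ} (hB : #B ≤ n) (hnm : n ≤ m) :
    ∃ P : Finset (Fin m), (∀ a : Fin m, (a : ℕ) ∈ B → a ∈ P) ∧ #P = n := by
  classical
  have hcard : #(B.preimage (Fin.val : Fin m → ℕ) Fin.val_injective.injOn) ≤ n :=
    (card_le_card_of_injOn Fin.val (fun _ ha => mem_preimage.mp ha)
      Fin.val_injective.injOn).trans hB
  obtain ⟨P, hBP, hP⟩ := exists_superset_card_eq hcard (by simpa using hnm)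
  exact ⟨P, fun a ha => hBP (mem_preimage.mpr ha), hP⟩

noncomputable def blockEquiv {α : Type*} [DecidableEq α] (s : Finset α) (f : α → ℕ) :
    (∀ k : s, Fin (f k)) ≃ Fin (∏ k ∈ s, f k) :=
  Fintype.equivOfCardEq (by simp [prod_attach])

theorem exists_card_eq_prod_and_blockEquiv_mem {α : Type*} [DecidableEq α] (s : Finset α)
    {f g : α → ℕ} (hgf : ∀ k, g k ≤ f k) (B : α → Finset ℕ) (hB : ∀ k, #(B k) ≤ g k) :
    ∃ C : Finset ℕ, #C = ∏ k ∈ s, g k ∧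
      ∀ d : ∀ k : s, Fin (f k), (∀ k : s, (d k : ℕ) ∈ B k) → (blockEquiv s f d : ℕ) ∈ C := by
  choose P hBP hP using fun k => exists_fin_superset_card_eq (hB k) (hgf k)
  refine ⟨(Fintype.piFinset fun k : s => P k).map
    ((blockEquiv s f).toEmbedding.trans Fin.valEmbedding), ?_, fun d hd => ?_⟩
  · rw [card_map, Fintype.card_piFinset]
    simp only [hP, prod_coe_sort s g]
  · exact mem_map_of_mem _ (Fintype.mem_piFinset.mpr fun k => hBP _ _ (hd k))

theorem slalomCov_prod_le_of_pairwise_disjoint {f g : ℕ → ℕ} (s : ℕ → Finset ℕ)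
    (hs : Pairwise (Disjoint on s)) (hg : ∀ k, 1 ≤ g k) (hgf : ∀ k, g k ≤ f k) :
    slalomCov (fun i => ∏ k ∈ s i, f k) (fun i => ∏ k ∈ s i, g k) ≤ slalomCov f g := by
  refine slalomCov_le_of_tukey hg (fun x' x => ∀ i, ∃ d : ∀ k : s i, Fin (f k),
    (blockEquiv (s i) f d : ℕ) = x' i ∧ ∀ k, (d k : ℕ) = x k) (fun x' hx' => ?_) fun B hB => ?_
  · obtain ⟨x, hx, hxd⟩ := exists_forall_lt_and_eq_of_pairwise_disjoint hs
      (fun k => (hg k).trans (hgf k)) fun i => (blockEquiv (s i) f).symm ⟨x' i, hx' i⟩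
    exact ⟨x, hx, fun i => ⟨_, by simp, fun k => (hxd i k).symm⟩⟩
  · choose C hCcard hC using fun i =>
      exists_card_eq_prod_and_blockEquiv_mem (s i) hgf B fun k => (hB k).le
    refine ⟨C, hCcard, fun x' x hx'x hBx i => ?_⟩
    obtain ⟨d, hdx', hdx⟩ := hx'x i
    rw [← hdx']
    exact hC i d fun k => hdx k ▸ hBx k

theorem slalomCov_prod_le_general (f g : ℕ → ℕ) (hg : ∀ k, 1 ≤ g k) (hgf : ∀ k, g k < f k)
    (n : ℕ → ℕ) (hn : StrictMono n) :
    slalomCov (fun i => ∏ k ∈ Finset.Ico (n i) (n (i + 1)), f k)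
      (fun i => ∏ k ∈ Finset.Ico (n i) (n (i + 1)), g k) ≤ slalomCov f g :=
  slalomCov_prod_le_of_pairwise_disjoint _
    (fun i j hij => by
      simpa [← disjoint_coe] using hn.monotone.pairwise_disjoint_on_Ico_succ hij)
    hg fun k => (hgf k).le

theorem slalomCov_prod_le (f g : ℕ → ℕ) (hg : ∀ k, 1 ≤ g k) (hgf : ∀ k, g k < f k)
    (n : ℕ → ℕ) (hn0 : n 0 = 0) (hn : StrictMono n) :
    slalomCov (fun i => ∏ k ∈ Finset.Ico (n i) (n (i + 1)), f k)
      (fun i => ∏ k ∈ Finset.Ico (n i) (n (i + 1)), g k) ≤ slalomCov f g :=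
  slalomCov_prod_le_general f g hg hgf n hn
end

section
/- Let f, g : ℕ → ℕ with 1 ≤ g(k) < f(k) for all k, and suppose there exists a real ε > 0 such that g(k)^{1+ε} ≤ f(k) for all k. Then for every natural number n ≥ 1, 𝔠(f^n, g) = 𝔠(f,g), where f^n(k) = f(k)^n. -/
/-!
Let `𝓑` be a family of `g`-slaloms covering every `x < f`. To cover `x < fⁿ`, fix `k`, put
`z₀ = x k`, choose `B₀ ∈ 𝓑` covering the residues `z₀ mod f`, and replace `z₀` by its rank `z₁`
among the numbers whose residue mod `f k` lies in `B₀ k`; iterate. Roughly `z_{j+1} ≤ (g/f) z_j + g`,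
and because `f ≥ g^{1+ε}` the rank drops below `g k` after a number `N` of steps that does not
depend on `k`. As long as every `z_j mod f k` lies in `B_j k`, the map `z₀ ↦ z_N` is injective, so
each list `B₀, …, B_{N-1}` from `𝓑` determines, at every `k`, at most `g k` admissible starting
values below `f kⁿ`. Padded to `g`-slaloms, these sets form a covering family indexed by lists
over `𝓑`, hence of size `|𝓑|`: a diagonal argument shows that `𝓑` is infinite.
-/

open Finset Function

def compressStep (F : ℕ) (b : Finset ℕ) (z : ℕ) : ℕ := Nat.count (fun w => w % F ∈ b) z

def compress (F : ℕ) : List (Finset ℕ) → ℕ → ℕ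
  | [], z => z
  | b :: l, z => compress F l (compressStep F b z)

def Admissible (F : ℕ) : List (Finset ℕ) → ℕ → Prop
  | [], _ => True
  | b :: l, z => z % F ∈ b ∧ Admissible F l (compressStep F b z)

instance Admissible.decidablePred (F : ℕ) : ∀ l, DecidablePred (Admissible F l)
  | [] => fun _ => inferInstanceAs (Decidable True)
  | _ :: l => fun _ =>
    haveI := Admissible.decidablePred F l
    inferInstanceAs (Decidable (_ ∧ _))

def compressBound (G F h : ℕ) : ℕ := G * (h / F) + min (h % F) G

section Compression

variable {F : ℕ}

theorem compress_injOn (l : List (Finset ℕ)) :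
    Set.InjOn (compress F l) {z | Admissible F l z} := by
  induction l with
  | nil => exact fun _ _ _ _ h => h
  | cons b l ih =>
    rintro z ⟨hz, hzl⟩ z' ⟨hz', hzl'⟩ h
    exact Nat.count_injective hz hz' (ih hzl hzl' h)

theorem count_mod_mem_mul_add (b : Finset ℕ) (q s : ℕ) :
    Nat.count (fun w => w % F ∈ b) (F * q + s) =
      q * Nat.count (fun w => w % F ∈ b) F + Nat.count (fun w => w % F ∈ b) s := by
  induction q with
  | zero => simp
  | succ q ih =>
    rw [show F * (q + 1) + s = F + (F * q + s) by ring, Nat.count_add]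
    simp only [Nat.add_mod_left, ih]
    ring

theorem count_mod_mem_le_card (b : Finset ℕ) {s : ℕ} (hs : s ≤ F) :
    Nat.count (fun w => w % F ∈ b) s ≤ b.card := by
  rw [Nat.count_eq_card_filter_range]
  refine card_le_card fun w hw => ?_
  rw [mem_filter, mem_range] at hw
  simpa only [Nat.mod_eq_of_lt (hw.1.trans_le hs)] using hw.2

theorem count_mod_mem_le (b : Finset ℕ) (hF : 0 < F) (h : ℕ) :
    Nat.count (fun w => w % F ∈ b) h ≤ compressBound b.card F h := by
  have hmod : h % F ≤ F := (Nat.mod_lt h hF).le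
  conv_lhs => rw [← Nat.div_add_mod h F, count_mod_mem_mul_add]
  rw [compressBound, mul_comm b.card]
  exact add_le_add (Nat.mul_le_mul_left _ (count_mod_mem_le_card b le_rfl))
    (le_min (Nat.count_le _) (count_mod_mem_le_card b hmod))

theorem compressBound_mono_left {G G' : ℕ} (hG : G ≤ G') (h : ℕ) :
    compressBound G F h ≤ compressBound G' F h := by
  unfold compressBound
  gcongr

theorem compress_lt_iterate_compressBound (hF : 0 < F) {G : ℕ} {l : List (Finset ℕ)}
    (hl : ∀ b ∈ l, b.card ≤ G) {z h : ℕ} (hz : Admissible F l z) (hzh : z < h) :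
    compress F l z < (compressBound G F)^[l.length] h := by
  induction l generalizing z h with
  | nil => exact hzh
  | cons b l ih =>
    have hb := hl b List.mem_cons_self
    have hstep : compressStep F b z < compressBound G F h :=
      ((Nat.count_strict_mono (p := fun w => w % F ∈ b) hz.1 hzh).trans_le (count_mod_mem_le b hF h)).trans_le
        (compressBound_mono_left hb h)
    exact ih (fun b' hb' => hl b' (List.mem_cons_of_mem b hb')) hz.2 hstep

end Compression

section Dynamics

variable {G F : ℕ}

theorem compressBound_le_of_le (hF : 0 < F) {h : ℕ} (hh : h ≤ F) : compressBound G F h ≤ G := by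
  rcases hh.lt_or_eq with hh | rfl
  · simp [compressBound, Nat.div_eq_of_lt hh]
  · simp [compressBound, Nat.div_self hF]

theorem compressBound_lt_self (hGF : G < F) {h : ℕ} (hh : F < h) : compressBound G F h < h := by
  have hq : 0 < h / F := Nat.div_pos hh.le (by omega)
  have hmul : G * (h / F) < F * (h / F) := Nat.mul_lt_mul_of_pos_right hGF hq
  have hdiv := Nat.div_add_mod h F
  unfold compressBound
  omega

theorem iterate_compressBound_le_of_le_add (hGF : G < F) (K : ℕ) {h : ℕ} (hh : h ≤ F + K) :
    (compressBound G F)^[K] h ≤ F := by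
  induction K generalizing h with
  | zero => exact hh
  | succ K ih =>
    rw [iterate_succ_apply]
    apply ih
    rcases le_or_gt h F with hle | hlt
    · have := compressBound_le_of_le (G := G) (by omega) hle
      omega
    · have := compressBound_lt_self hGF hlt
      omega

theorem compressBound_le_affine (h : ℕ) :
    (compressBound G F h : ℝ) ≤ G / F * h + G := by
  have hdiv : ((h / F : ℕ) : ℝ) ≤ h / F := Nat.cast_div_le
  have hmin : ((min (h % F) G : ℕ) : ℝ) ≤ G := by exact_mod_cast min_le_right _ _
  calc (compressBound G F h : ℝ) = G * ((h / F : ℕ) : ℝ) + ((min (h % F) G : ℕ) : ℝ) := by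
        simp only [compressBound, Nat.cast_add, Nat.cast_mul]
    _ ≤ G * (h / F) + G := by gcongr
    _ = G / F * h + G := by ring

theorem le_pow_mul_add_of_le_mul_add {u : ℕ → ℝ} {r c : ℝ} (hr0 : 0 ≤ r) (hr1 : r < 1)
    (hc : 0 ≤ c) (hu : ∀ j, u (j + 1) ≤ r * u j + c) (j : ℕ) :
    u j ≤ r ^ j * u 0 + c / (1 - r) := by
  have h1r : 0 < 1 - r := by linarith
  induction j with
  | zero => simpa using div_nonneg hc h1r.le
  | succ j ih =>
    calc u (j + 1) ≤ r * u j + c := hu j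
      _ ≤ r * (r ^ j * u 0 + c / (1 - r)) + c := by gcongr
      _ = r ^ (j + 1) * u 0 + c / (1 - r) := by field_simp; ring

theorem lt_two_pow_of_pow_succ_le {m : ℕ} (hm : m ≠ 0) (h : G ^ (m + 1) ≤ F ^ m)
    (hF : F < 2 * G) : G < 2 ^ m := by
  by_contra! hG
  have hlt : F ^ m < (2 * G) ^ m := Nat.pow_lt_pow_left hF hm
  have hle : (2 * G) ^ m ≤ G ^ (m + 1) := by
    rw [mul_pow, pow_succ']
    exact Nat.mul_le_mul_right _ hG
  omega

theorem div_one_sub_div_le {m : ℕ} (hm : m ≠ 0) (hGF : G < F) (h : G ^ (m + 1) ≤ F ^ m) :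
    (G : ℝ) / (1 - G / F) ≤ F + 2 * 4 ^ m := by
  have hGF' : (G : ℝ) + 1 ≤ F := by exact_mod_cast hGF
  have hFG : (0 : ℝ) < F - G := by linarith
  have hF : (0 : ℝ) < F := by linarith [(Nat.cast_nonneg G : (0 : ℝ) ≤ G)]
  rw [one_sub_div hF.ne', div_div_eq_mul_div, div_le_iff₀ hFG]
  rcases le_or_gt (2 * G) F with h2G | h2G
  · have h2G' : 2 * (G : ℝ) ≤ F := by exact_mod_cast h2G
    nlinarith [(Nat.cast_nonneg G : (0 : ℝ) ≤ G), pow_pos (by norm_num : (0 : ℝ) < 4) m]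
  · have hG : (G : ℝ) + 1 ≤ 2 ^ m := by exact_mod_cast lt_two_pow_of_pow_succ_le hm h h2G
    have h2G' : (F : ℝ) < 2 * G := by exact_mod_cast h2G
    have h4 : (4 : ℝ) ^ m = 2 ^ m * 2 ^ m := by rw [← mul_pow]; norm_num
    nlinarith [(Nat.cast_nonneg G : (0 : ℝ) ≤ G)]

theorem pow_mul_pow_le_pow {m n : ℕ} (h : G ^ (m + 1) ≤ F ^ m) :
    G ^ ((m + 1) * n) * F ^ n ≤ F ^ ((m + 1) * n) := by
  calc G ^ ((m + 1) * n) * F ^ n = (G ^ (m + 1)) ^ n * F ^ n := by rw [pow_mul]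
    _ ≤ (F ^ m) ^ n * F ^ n := by gcongr
    _ = F ^ ((m + 1) * n) := by ring

theorem exists_iterate_compressBound_le (n : ℕ) {m : ℕ} (hm : m ≠ 0) :
    ∃ N, ∀ G F, G < F → G ^ (m + 1) ≤ F ^ m → (compressBound G F)^[N] (F ^ n) ≤ G := by
  -- `(m + 1) * n` geometric steps reach `F + 1 + G / (1 - G / F) ≤ F + 2 * 4 ^ m + 1`, then each
  -- step lowers the value by at least one until it is `≤ F`, and one more step ends `≤ G`.
  refine ⟨1 + (2 * 4 ^ m + 1) + (m + 1) * n, fun G F hGF h => ?_⟩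
  have hF : 0 < F := by omega
  have hFr : (0 : ℝ) < F := by exact_mod_cast hF
  have hGFr : (G : ℝ) / F < 1 := (div_lt_one hFr).2 (by exact_mod_cast hGF)
  rw [iterate_add_apply, iterate_add_apply, iterate_one]
  refine compressBound_le_of_le hF (iterate_compressBound_le_of_le_add hGF _ ?_)
  have hgeom : ((G : ℝ) / F) ^ ((m + 1) * n) * (F ^ n : ℕ) ≤ 1 := by
    rw [div_pow, div_mul_eq_mul_div, div_le_one (by positivity)]
    exact_mod_cast pow_mul_pow_le_pow h
  have hiter := le_pow_mul_add_of_le_mul_add (u := fun j => ((compressBound G F)^[j] (F ^ n) : ℝ))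
    (by positivity) hGFr (Nat.cast_nonneg G)
    (fun j => by simpa only [iterate_succ_apply'] using compressBound_le_affine _)
    ((m + 1) * n)
  have hfix := div_one_sub_div_le hm hGF h
  simp only [iterate_zero, id_eq] at hiter
  have hbound : ((compressBound G F)^[(m + 1) * n] (F ^ n) : ℝ) ≤ (F + (2 * 4 ^ m + 1) : ℕ) := by
    push_cast
    linarith
  exact_mod_cast hbound

theorem pow_succ_le_pow_of_rpow_le {ε : ℝ} (hε : 0 < ε) (hG : 1 ≤ G)
    (h : (G : ℝ) ^ ((1 : ℝ) + ε) ≤ F) : G ^ (⌈ε⁻¹⌉₊ + 1) ≤ F ^ ⌈ε⁻¹⌉₊ := by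
  set m := ⌈ε⁻¹⌉₊
  have hG' : (1 : ℝ) ≤ G := by exact_mod_cast hG
  have hm : (m : ℝ) + 1 ≤ (1 + ε) * m := by
    have := mul_le_mul_of_nonneg_left (Nat.le_ceil ε⁻¹) hε.le
    rw [mul_inv_cancel₀ hε.ne'] at this
    linarith
  have : (G : ℝ) ^ (m + 1) ≤ (F : ℝ) ^ m :=
    calc (G : ℝ) ^ (m + 1) = (G : ℝ) ^ ((m : ℝ) + 1) := by norm_cast
      _ ≤ (G : ℝ) ^ ((1 + ε) * m) := Real.rpow_le_rpow_of_exponent_le hG' hm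
      _ = ((G : ℝ) ^ (1 + ε)) ^ m := by rw [Real.rpow_mul (by positivity), Real.rpow_natCast]
      _ ≤ (F : ℝ) ^ m := by gcongr
  exact_mod_cast this

end Dynamics

section Slaloms

variable {f f' g : ℕ → ℕ}

theorem slalomCov_le_mk {𝓑 : Set (ℕ → Finset ℕ)} (hsl : ∀ B ∈ 𝓑, IsSlalom g B)
    (hcov : ∀ x : ℕ → ℕ, (∀ k, x k < f k) → ∃ B ∈ 𝓑, Covers B x) :
    slalomCov f g ≤ Cardinal.mk 𝓑 :=
  csInf_le' ⟨𝓑, hsl, hcov, rfl⟩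

theorem exists_slalomCov_eq_mk (hg : ∀ k, 1 ≤ g k) : ∃ 𝓑 : Set (ℕ → Finset ℕ),
    (∀ B ∈ 𝓑, IsSlalom g B) ∧ (∀ x : ℕ → ℕ, (∀ k, x k < f k) → ∃ B ∈ 𝓑, Covers B x) ∧
    slalomCov f g = Cardinal.mk 𝓑 := by
  have hne : {c : Cardinal | ∃ 𝓑 : Set (ℕ → Finset ℕ), (∀ B ∈ 𝓑, IsSlalom g B) ∧
      (∀ x : ℕ → ℕ, (∀ k, x k < f k) → ∃ B ∈ 𝓑, Covers B x) ∧ c = Cardinal.mk 𝓑}.Nonempty :=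
    ⟨_, {B | IsSlalom g B}, fun B hB => hB, fun x _ =>
      ⟨fun k => Ico (x k) (x k + g k), fun k => by simp, fun k => mem_Ico.2 ⟨le_rfl, Nat.lt_add_of_pos_right (hg k)⟩⟩, rfl⟩
  exact csInf_mem hne

theorem slalomCov_le_mk_of_card_le {𝓒 : Set (ℕ → Finset ℕ)}
    (hcard : ∀ C ∈ 𝓒, ∀ k, (C k).card ≤ g k)
    (hcov : ∀ x : ℕ → ℕ, (∀ k, x k < f k) → ∃ C ∈ 𝓒, Covers C x) :
    slalomCov f g ≤ Cardinal.mk 𝓒 := by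
  have hpad : ∀ C : 𝓒, ∃ B : ℕ → Finset ℕ, IsSlalom g B ∧ ∀ k, C.1 k ⊆ B k := fun C => by
    choose B hsub hB using fun k => Infinite.exists_superset_card_eq (C.1 k) (g k) (hcard C.1 C.2 k)
    exact ⟨B, hB, hsub⟩
  choose pad hpad_slalom hpad_sub using hpad
  refine (slalomCov_le_mk (𝓑 := Set.range pad) ?_ fun x hx => ?_).trans Cardinal.mk_range_le
  · rintro _ ⟨C, rfl⟩
    exact hpad_slalom C
  · obtain ⟨C, hC, hxC⟩ := hcov x hx
    exact ⟨pad ⟨C, hC⟩, ⟨_, rfl⟩, fun k => hpad_sub _ k (hxC k)⟩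

theorem slalomCov_mono (hg : ∀ k, 1 ≤ g k) (hff' : ∀ k, f k ≤ f' k) :
    slalomCov f g ≤ slalomCov f' g := by
  obtain ⟨𝓑, hsl, hcov, heq⟩ := exists_slalomCov_eq_mk (f := f') hg
  rw [heq]
  exact slalomCov_le_mk hsl fun x hx => hcov x fun k => (hx k).trans_le (hff' k)

theorem not_countable_of_covers (hgf : ∀ k, g k < f k) {𝓑 : Set (ℕ → Finset ℕ)}
    (hsl : ∀ B ∈ 𝓑, IsSlalom g B)
    (hcov : ∀ x : ℕ → ℕ, (∀ k, x k < f k) → ∃ B ∈ 𝓑, Covers B x) : ¬ 𝓑.Countable := by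
  intro hc
  obtain ⟨B₀, hB₀, -⟩ := hcov 0 fun k => (Nat.zero_le _).trans_lt (hgf k)
  obtain ⟨e, rfl⟩ := hc.exists_eq_range ⟨B₀, hB₀⟩
  have hmiss : ∀ k, ∃ m ∈ range (f k), m ∉ e k k := fun k =>
    exists_mem_notMem_of_card_lt_card (by rw [hsl _ ⟨k, rfl⟩ k, card_range]; exact hgf k)
  choose x hx hxe using hmiss
  obtain ⟨_, ⟨i, rfl⟩, hi⟩ := hcov x fun k => mem_range.1 (hx k)
  exact hxe i (hi i)

theorem exists_admissible_chain (hf : ∀ k, 0 < f k) {𝓑 : Set (ℕ → Finset ℕ)}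
    (hcov : ∀ x : ℕ → ℕ, (∀ k, x k < f k) → ∃ B ∈ 𝓑, Covers B x) (N : ℕ) (x : ℕ → ℕ) :
    ∃ l : List (ℕ → Finset ℕ), l.length = N ∧ (∀ B ∈ l, B ∈ 𝓑) ∧
      ∀ k, Admissible (f k) (l.map (· k)) (x k) := by
  induction N generalizing x with
  | zero => exact ⟨[], rfl, by simp, fun k => trivial⟩
  | succ N ih =>
    obtain ⟨B, hB, hxB⟩ := hcov (fun k => x k % f k) fun k => Nat.mod_lt _ (hf k)
    obtain ⟨l, hlen, hl𝓑, hadm⟩ := ih fun k => compressStep (f k) (B k) (x k)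
    refine ⟨B :: l, by simp [hlen], ?_, fun k => ⟨hxB k, hadm k⟩⟩
    simpa [hB] using hl𝓑

def liftSlalom (f f' g : ℕ → ℕ) (l : List (ℕ → Finset ℕ)) (k : ℕ) : Finset ℕ :=
  (range (f' k)).filter fun z =>
    Admissible (f k) (l.map (· k)) z ∧ compress (f k) (l.map (· k)) z < g k

theorem card_liftSlalom_le (l : List (ℕ → Finset ℕ)) (k : ℕ) :
    (liftSlalom f f' g l k).card ≤ g k := by
  have hinj : Set.InjOn (compress (f k) (l.map (· k))) (liftSlalom f f' g l k) :=
    (compress_injOn _).mono fun z hz => (mem_filter.1 hz).2.1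
  simpa using card_le_card_of_injOn _ (fun z hz => mem_range.2 (mem_filter.1 hz).2.2) hinj

theorem slalomCov_le_of_iterate_compressBound_le (hg : ∀ k, 1 ≤ g k) (hgf : ∀ k, g k < f k)
    {N : ℕ} (hN : ∀ k, (compressBound (g k) (f k))^[N] (f' k) ≤ g k) :
    slalomCov f' g ≤ slalomCov f g := by
  obtain ⟨𝓑, hsl, hcov, heq⟩ := exists_slalomCov_eq_mk (f := f) hg
  have : Infinite 𝓑 := Set.infinite_coe_iff.2 fun hfin =>
    not_countable_of_covers hgf hsl hcov hfin.countable
  rw [heq, ← Cardinal.mk_list_eq_mk]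
  refine (slalomCov_le_mk_of_card_le
    (𝓒 := Set.range fun l : List 𝓑 => liftSlalom f f' g (l.map (↑))) ?_ fun x hx => ?_).trans
    Cardinal.mk_range_le
  · rintro _ ⟨l, rfl⟩ k
    exact card_liftSlalom_le _ k
  have hf : ∀ k, 0 < f k := fun k => (Nat.zero_le _).trans_lt (hgf k)
  obtain ⟨l, hlen, hl𝓑, hadm⟩ := exists_admissible_chain hf hcov N x
  lift l to List 𝓑 using hl𝓑
  refine ⟨_, ⟨l, rfl⟩, fun k => mem_filter.2 ⟨mem_range.2 (hx k), hadm k, ?_⟩⟩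
  have hcard : ∀ b ∈ (l.map Subtype.val).map (· k), b.card ≤ g k := by
    simp only [List.map_map, List.mem_map, forall_exists_index, and_imp]
    rintro _ B _ rfl
    exact (hsl B B.2 k).le
  have := compress_lt_iterate_compressBound (hf k) hcard (hadm k) (hx k)
  simp only [List.length_map] at this hlen
  exact this.trans_le (hlen ▸ hN k)

end Slaloms

theorem slalomCov_pow_eq (f g : ℕ → ℕ) (hg : ∀ k, 1 ≤ g k) (hgf : ∀ k, g k < f k)
    (ε : ℝ) (hε : 0 < ε) (hpow : ∀ k, (g k : ℝ) ^ ((1 : ℝ) + ε) ≤ (f k : ℝ)) :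
    ∀ n : ℕ, 1 ≤ n → slalomCov (fun k => f k ^ n) g = slalomCov f g := by
  intro n hn
  obtain ⟨N, hN⟩ := exists_iterate_compressBound_le n (Nat.ceil_pos.2 (inv_pos.2 hε)).ne'
  refine le_antisymm ?_ (slalomCov_mono hg fun k => Nat.le_self_pow (by omega) _)
  exact slalomCov_le_of_iterate_compressBound_le hg hgf fun k =>
    hN _ _ (hgf k) (pow_succ_le_pow_of_rpow_le hε (hg k) (hpow k))
end
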